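/- Let W ∈ ℝ^{m×m} be a symmetric doubly stochastic matrix, P_m the m×m matrix with all entries 1/m, I_m the identity, and set λ̂ := ‖W − P_m‖₂ (spectral norm), assumed < 1. Then for every t ≥ 1 and all matrices Ξ_1, …, Ξ_t ∈ ℝ^{m×d}: ‖(I_m − P_m)·Σ_{τ=0}^{t−1} W^τ Ξ_{t−τ}‖_F² ≤ (1/(1−λ̂))·‖Ξ_t‖_F² + Σ_{τ=1}^{t−1} λ̂^{2τ}·‖Ξ_{t−τ}‖_F² + (1/(1−λ̂))·Σ_{τ=1}^{t−1} λ̂^{τ}·‖Ξ_{t−τ}‖_F². -/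

import Mathlib

open Finset

noncomputable section

attribute [local instance] Matrix.frobeniusSeminormedAddCommGroup
  Matrix.frobeniusNormedAddCommGroup

/-- Spectral norm (ℓ2 operator norm) of a real matrix. -/
noncomputable def specNorm {a b : ℕ} (A : Matrix (Fin a) (Fin b) ℝ) : ℝ :=
  ‖LinearMap.toContinuousLinearMap (Matrix.toEuclideanLin A)‖

/-- Frobenius norm of a real matrix. -/
noncomputable def frobNorm {a b : ℕ} (A : Matrix (Fin a) (Fin b) ℝ) : ℝ :=
  Real.sqrt (∑ i, ∑ j, A i j ^ 2)

lemma frobNorm_eq_norm {a b : ℕ} (A : Matrix (Fin a) (Fin b) ℝ) : frobNorm A = ‖A‖ := by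
  rw [frobNorm, Matrix.frobenius_norm_def, Real.sqrt_eq_rpow]
  congr 1
  refine Finset.sum_congr rfl fun i _ => Finset.sum_congr rfl fun j _ => ?_
  rw [Real.rpow_two, Real.norm_eq_abs, sq_abs]

lemma frobNorm_nonneg {a b : ℕ} (A : Matrix (Fin a) (Fin b) ℝ) : 0 ≤ frobNorm A :=
  Real.sqrt_nonneg _

lemma specNorm_nonneg {a b : ℕ} (A : Matrix (Fin a) (Fin b) ℝ) : 0 ≤ specNorm A :=
  norm_nonneg _

lemma frobNorm_sq {a b : ℕ} (A : Matrix (Fin a) (Fin b) ℝ) :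
    frobNorm A ^ 2 = ∑ i, ∑ j, A i j ^ 2 := by
  rw [frobNorm, Real.sq_sqrt (by positivity)]

lemma norm_toEuclideanLin_apply_le {a b : ℕ} (A : Matrix (Fin a) (Fin b) ℝ)
    (x : EuclideanSpace ℝ (Fin b)) :
    ‖Matrix.toEuclideanLin A x‖ ≤ specNorm A * ‖x‖ :=
  (LinearMap.toContinuousLinearMap (Matrix.toEuclideanLin A)).le_opNorm x

lemma mulVec_sq_sum_le {a b : ℕ} (A : Matrix (Fin a) (Fin b) ℝ) (v : Fin b → ℝ) :
    ∑ i, (A.mulVec v i) ^ 2 ≤ specNorm A ^ 2 * ∑ j, (v j) ^ 2 := by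
  set x : EuclideanSpace ℝ (Fin b) := (WithLp.equiv 2 _).symm v with hxdef
  have hx : ‖x‖ ^ 2 = ∑ j, (v j) ^ 2 := by
    rw [EuclideanSpace.norm_eq, Real.sq_sqrt (by positivity)]
    simp [hxdef, Real.norm_eq_abs, sq_abs]
  have hy : ‖Matrix.toEuclideanLin A x‖ ^ 2 = ∑ i, (A.mulVec v i) ^ 2 := by
    rw [EuclideanSpace.norm_eq, Real.sq_sqrt (by positivity)]
    have : ∀ i, (Matrix.toEuclideanLin A x) i = A.mulVec v i := by
      intro i
      simp [Matrix.toEuclideanLin_apply, hxdef]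
    simp [this, Real.norm_eq_abs, sq_abs]
  have h := norm_toEuclideanLin_apply_le A x
  nlinarith [norm_nonneg x, norm_nonneg (Matrix.toEuclideanLin A x), specNorm_nonneg A]

lemma frobNorm_mul_le {a b c : ℕ} (A : Matrix (Fin a) (Fin b) ℝ) (B : Matrix (Fin b) (Fin c) ℝ) :
    frobNorm (A * B) ≤ specNorm A * frobNorm B := by
  have hsq : frobNorm (A * B) ^ 2 ≤ (specNorm A * frobNorm B) ^ 2 := by
    rw [frobNorm_sq, mul_pow, frobNorm_sq]
    calc (∑ i, ∑ j, (A * B) i j ^ 2) = ∑ j, ∑ i, (A * B) i j ^ 2 := Finset.sum_comm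
      _ ≤ ∑ j : Fin c, specNorm A ^ 2 * ∑ k, B k j ^ 2 := by
          refine Finset.sum_le_sum fun j _ => ?_
          have := mulVec_sq_sum_le A (fun k => B k j)
          simpa [Matrix.mulVec, Matrix.mul_apply, dotProduct] using this
      _ = specNorm A ^ 2 * ∑ k, ∑ j, B k j ^ 2 := by
          rw [← Finset.mul_sum, Finset.sum_comm]
  nlinarith [frobNorm_nonneg (A * B), mul_nonneg (specNorm_nonneg A) (frobNorm_nonneg B)]

lemma specNorm_mul_le {a b c : ℕ} (A : Matrix (Fin a) (Fin b) ℝ) (B : Matrix (Fin b) (Fin c) ℝ) :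
    specNorm (A * B) ≤ specNorm A * specNorm B := by
  refine ContinuousLinearMap.opNorm_le_bound _
    (mul_nonneg (specNorm_nonneg A) (specNorm_nonneg B)) fun x => ?_
  have hcomp : Matrix.toEuclideanLin (A * B) x = Matrix.toEuclideanLin A (Matrix.toEuclideanLin B x) := by
    simp [Matrix.toEuclideanLin_apply, Matrix.mulVec_mulVec]
  have h1 : ‖Matrix.toEuclideanLin (A * B) x‖ ≤ specNorm A * ‖Matrix.toEuclideanLin B x‖ := by
    rw [hcomp]; exact norm_toEuclideanLin_apply_le A _
  have h2 := norm_toEuclideanLin_apply_le B x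
  calc ‖(LinearMap.toContinuousLinearMap (Matrix.toEuclideanLin (A * B))) x‖
      = ‖Matrix.toEuclideanLin (A * B) x‖ := rfl
    _ ≤ specNorm A * ‖Matrix.toEuclideanLin B x‖ := h1
    _ ≤ specNorm A * (specNorm B * ‖x‖) :=
        mul_le_mul_of_nonneg_left h2 (specNorm_nonneg A)
    _ = specNorm A * specNorm B * ‖x‖ := by ring

lemma specNorm_le_one_of_proj {a : ℕ} (Q : Matrix (Fin a) (Fin a) ℝ)
    (hQ : Q.IsHermitian) (hQQ : Q * Q = Q) : specNorm Q ≤ 1 := by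
  refine ContinuousLinearMap.opNorm_le_bound _ zero_le_one fun x => ?_
  rw [one_mul]
  have hsym := Matrix.isHermitian_iff_isSymmetric.1 hQ
  set y := Matrix.toEuclideanLin Q x with hy
  have hyy : Matrix.toEuclideanLin Q y = y := by
    rw [hy]
    have e : Matrix.toEuclideanLin Q (Matrix.toEuclideanLin Q x)
        = Matrix.toEuclideanLin (Q * Q) x := by
      simp [Matrix.toEuclideanLin_apply, Matrix.mulVec_mulVec]
    rw [e, hQQ]
  have h1 : ‖y‖ ^ 2 = inner ℝ x y := by
    rw [← real_inner_self_eq_norm_sq]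
    calc (inner ℝ y y : ℝ) = inner ℝ x (Matrix.toEuclideanLin Q y) := by
          rw [hy]; exact hsym x _
      _ = inner ℝ x y := by rw [hyy]
  have h2 : (inner ℝ x y : ℝ) ≤ ‖x‖ * ‖y‖ := real_inner_le_norm x y
  show ‖y‖ ≤ ‖x‖
  nlinarith [norm_nonneg y, norm_nonneg x]

lemma geom_Icc_le {x : ℝ} (hx0 : 0 ≤ x) (hx1 : x < 1) (n : ℕ) :
    ∑ τ ∈ Finset.Icc 1 n, x ^ τ ≤ x / (1 - x) := by
  have h1x : 0 < 1 - x := by linarith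
  have key : (1 - x) * ∑ τ ∈ Finset.Icc 1 n, x ^ τ = x - x ^ (n + 1) := by
    induction n with
    | zero => simp
    | succ n ih =>
      rw [Finset.sum_Icc_succ_top (Nat.succ_le_succ (Nat.zero_le n)), mul_add, ih]
      ring
  have h2 : ∑ τ ∈ Finset.Icc 1 n, x ^ τ = (x - x ^ (n + 1)) / (1 - x) := by
    rw [eq_div_iff (ne_of_gt h1x), ← key]; ring
  rw [h2]
  exact div_le_div_of_nonneg_right (sub_le_self _ (pow_nonneg hx0 _)) h1x.le

/-- bound on the consensus contraction of accumulated terms through a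
symmetric doubly stochastic mixing matrix. -/
theorem stmt_19 {m d : ℕ} (W : Matrix (Fin m) (Fin m) ℝ)
    (hW : W.IsHermitian) (hWnonneg : ∀ i j, 0 ≤ W i j) (hWrow : ∀ i, ∑ j, W i j = 1)
    (P : Matrix (Fin m) (Fin m) ℝ) (hP : ∀ i j, P i j = (m : ℝ)⁻¹)
    (lam : ℝ) (hlam : lam = specNorm (W - P)) (hlam1 : lam < 1)
    (t : ℕ) (ht : 1 ≤ t) (Xi : ℕ → Matrix (Fin m) (Fin d) ℝ) :
    frobNorm ((1 - P) * ∑ τ ∈ range t, W ^ τ * Xi (t - τ)) ^ 2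
      ≤ 1 / (1 - lam) * frobNorm (Xi t) ^ 2
        + ∑ τ ∈ Icc 1 (t - 1), lam ^ (2 * τ) * frobNorm (Xi (t - τ)) ^ 2
        + 1 / (1 - lam) * ∑ τ ∈ Icc 1 (t - 1), lam ^ τ * frobNorm (Xi (t - τ)) ^ 2 := by
  have hlam0 : 0 ≤ lam := hlam ▸ specNorm_nonneg _
  have h1x : 0 < 1 - lam := by linarith
  have hZ0 : (0:ℝ) ≤ ∑ τ ∈ Icc 1 (t - 1), lam ^ (2 * τ) * frobNorm (Xi (t - τ)) ^ 2 :=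
    Finset.sum_nonneg fun τ _ => mul_nonneg (pow_nonneg hlam0 _) (sq_nonneg _)
  have hV0 : (0:ℝ) ≤ ∑ τ ∈ Icc 1 (t - 1), lam ^ τ * frobNorm (Xi (t - τ)) ^ 2 :=
    Finset.sum_nonneg fun τ _ => mul_nonneg (pow_nonneg hlam0 _) (sq_nonneg _)
  rcases Nat.eq_zero_or_pos m with hm | hm
  · subst hm
    have hL : frobNorm ((1 - P) * ∑ τ ∈ range t, W ^ τ * Xi (t - τ)) = 0 := by
      rw [frobNorm]; simp
    rw [hL]
    have hb : (0:ℝ) ≤ 1 / (1 - lam) := by positivity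
    have h1 : (0:ℝ) ≤ 1 / (1 - lam) * frobNorm (Xi t) ^ 2 := mul_nonneg hb (sq_nonneg _)
    nlinarith [mul_nonneg hb hV0]
  -- main case
  have hmne : (m:ℝ) ≠ 0 := Nat.cast_ne_zero.2 (by omega)
  have hsymm : ∀ i j, W i j = W j i := fun i j => by
    have := congrFun (congrFun hW j) i
    simpa [Matrix.conjTranspose_apply] using this
  have hPsym : P.IsHermitian := by
    ext i j; simp [Matrix.conjTranspose_apply, hP]
  have hPP : P * P = P := by
    ext i j
    simp [Matrix.mul_apply, hP, Finset.sum_const, Finset.card_univ, Fintype.card_fin]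
    field_simp
  have hWP : W * P = P := by
    ext i j
    simp only [Matrix.mul_apply, hP]
    rw [← Finset.sum_mul, hWrow, one_mul]
  have hPW : P * W = P := by
    ext i j
    simp only [Matrix.mul_apply, hP]
    rw [← Finset.mul_sum]
    have : ∑ k, W k j = 1 := by
      rw [Finset.sum_congr rfl fun k _ => hsymm k j, hWrow]
    rw [this, mul_one]
  have hQherm : (1 - P).IsHermitian := Matrix.isHermitian_one.sub hPsym
  have hQQ : (1 - P) * (1 - P) = 1 - P := by
    have h : (1 - P) * (1 - P) = 1 - P - P + P * P := by noncomm_ring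
    rw [h, hPP]; abel
  have hQ1 : specNorm (1 - P) ≤ 1 := specNorm_le_one_of_proj _ hQherm hQQ
  have hXP : (W - P) * P = 0 := by rw [Matrix.sub_mul, hWP, hPP, sub_self]
  have hXnP : ∀ k : ℕ, (W - P) ^ (k + 1) * P = 0 := fun k => by
    rw [pow_succ, Matrix.mul_assoc, hXP, Matrix.mul_zero]
  have hcontr : ∀ τ : ℕ, 1 ≤ τ → (1 - P) * W ^ τ = (W - P) ^ τ := by
    intro τ hτ
    refine Nat.le_induction ?_ ?_ τ hτ
    · rw [pow_one, pow_one, Matrix.sub_mul, Matrix.one_mul, hPW]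
    · intro k hk ih
      obtain ⟨j, rfl⟩ : ∃ j, k = j + 1 := ⟨k - 1, by omega⟩
      rw [pow_succ W, ← Matrix.mul_assoc, ih]
      have h2 : (W - P) ^ (j + 1) * W = (W - P) ^ (j + 1) * (W - P) + (W - P) ^ (j + 1) * P := by
        noncomm_ring
      rw [h2, hXnP j, add_zero, ← pow_succ]
  have hspecpow : ∀ τ : ℕ, 1 ≤ τ → specNorm ((W - P) ^ τ) ≤ lam ^ τ := by
    intro τ hτ
    refine Nat.le_induction ?_ ?_ τ hτ
    · rw [pow_one, pow_one, hlam]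
    · intro k _ ih
      rw [pow_succ, pow_succ]
      calc specNorm ((W - P) ^ k * (W - P)) ≤ specNorm ((W - P) ^ k) * specNorm (W - P) :=
            specNorm_mul_le _ _
        _ ≤ lam ^ k * lam := by
            rw [← hlam]
            exact mul_le_mul_of_nonneg_right ih (hlam ▸ hlam0)
  obtain ⟨n, rfl⟩ : ∃ n, t = n + 1 := ⟨t - 1, by omega⟩
  simp only [Nat.add_sub_cancel] at *
  have hdecomp : (1 - P) * ∑ τ ∈ range (n + 1), W ^ τ * Xi (n + 1 - τ)
      = (1 - P) * Xi (n + 1) + ∑ τ ∈ Icc 1 n, (W - P) ^ τ * Xi (n + 1 - τ) := by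
    rw [Matrix.mul_sum, Finset.sum_range_succ']
    rw [add_comm]
    congr 1
    · simp
    · rw [show Icc 1 n = Ico 1 (n + 1) from (Finset.Ico_add_one_right_eq_Icc 1 n).symm,
        Finset.sum_Ico_eq_sum_range]
      simp only [Nat.add_sub_cancel]
      refine Finset.sum_congr rfl fun i _ => ?_
      rw [← Matrix.mul_assoc, hcontr (i + 1) (by omega), add_comm 1 i]
  have htri : frobNorm ((1 - P) * ∑ τ ∈ range (n + 1), W ^ τ * Xi (n + 1 - τ))
      ≤ frobNorm (Xi (n + 1)) + ∑ τ ∈ Icc 1 n, lam ^ τ * frobNorm (Xi (n + 1 - τ)) := by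
    rw [hdecomp, frobNorm_eq_norm]
    calc ‖(1 - P) * Xi (n + 1) + ∑ τ ∈ Icc 1 n, (W - P) ^ τ * Xi (n + 1 - τ)‖
        ≤ ‖(1 - P) * Xi (n + 1)‖ + ‖∑ τ ∈ Icc 1 n, (W - P) ^ τ * Xi (n + 1 - τ)‖ :=
          norm_add_le _ _
      _ ≤ ‖(1 - P) * Xi (n + 1)‖ + ∑ τ ∈ Icc 1 n, ‖(W - P) ^ τ * Xi (n + 1 - τ)‖ := by
          gcongr
          exact norm_sum_le _ _
      _ ≤ frobNorm (Xi (n + 1)) + ∑ τ ∈ Icc 1 n, lam ^ τ * frobNorm (Xi (n + 1 - τ)) := by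
          gcongr with τ hτ
          · rw [← frobNorm_eq_norm]
            calc frobNorm ((1 - P) * Xi (n + 1)) ≤ specNorm (1 - P) * frobNorm (Xi (n + 1)) :=
                  frobNorm_mul_le _ _
              _ ≤ 1 * frobNorm (Xi (n + 1)) :=
                  mul_le_mul_of_nonneg_right hQ1 (frobNorm_nonneg _)
              _ = frobNorm (Xi (n + 1)) := one_mul _
          · rw [← frobNorm_eq_norm]
            calc frobNorm ((W - P) ^ τ * Xi (n + 1 - τ))
                ≤ specNorm ((W - P) ^ τ) * frobNorm (Xi (n + 1 - τ)) := frobNorm_mul_le _ _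
              _ ≤ lam ^ τ * frobNorm (Xi (n + 1 - τ)) :=
                  mul_le_mul_of_nonneg_right (hspecpow τ (Finset.mem_Icc.1 hτ).1)
                    (frobNorm_nonneg _)
  set b0 := frobNorm (Xi (n + 1)) with hb0def
  set U := ∑ τ ∈ Icc 1 n, lam ^ τ * frobNorm (Xi (n + 1 - τ)) with hUdef
  set V := ∑ τ ∈ Icc 1 n, lam ^ τ * frobNorm (Xi (n + 1 - τ)) ^ 2 with hVdef
  set c := ∑ τ ∈ Icc 1 n, lam ^ τ with hcdef
  clear_value b0 U V c
  have hb00 : 0 ≤ b0 := hb0def ▸ frobNorm_nonneg _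
  have hU0 : 0 ≤ U := by
    rw [hUdef]
    exact Finset.sum_nonneg fun τ _ => mul_nonneg (pow_nonneg hlam0 _) (frobNorm_nonneg _)
  have hc0 : 0 ≤ c := by
    rw [hcdef]
    exact Finset.sum_nonneg fun τ _ => pow_nonneg hlam0 _
  have hsq : frobNorm ((1 - P) * ∑ τ ∈ range (n + 1), W ^ τ * Xi (n + 1 - τ)) ^ 2
      ≤ (b0 + U) ^ 2 := by
    have h := htri
    nlinarith [frobNorm_nonneg ((1 - P) * ∑ τ ∈ range (n + 1), W ^ τ * Xi (n + 1 - τ))]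
  have hCS : U ^ 2 ≤ c * V := by
    have h := Finset.sum_mul_sq_le_sq_mul_sq (Icc 1 n)
      (fun τ => Real.sqrt (lam ^ τ)) (fun τ => Real.sqrt (lam ^ τ) * frobNorm (Xi (n + 1 - τ)))
    have e1 : ∀ τ ∈ Icc 1 n, Real.sqrt (lam ^ τ) * (Real.sqrt (lam ^ τ) * frobNorm (Xi (n + 1 - τ)))
        = lam ^ τ * frobNorm (Xi (n + 1 - τ)) := fun τ _ => by
      rw [← mul_assoc, Real.mul_self_sqrt (pow_nonneg hlam0 _)]
    have e2 : ∀ τ ∈ Icc 1 n, Real.sqrt (lam ^ τ) ^ 2 = lam ^ τ := fun τ _ =>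
      Real.sq_sqrt (pow_nonneg hlam0 _)
    have e3 : ∀ τ ∈ Icc 1 n, (Real.sqrt (lam ^ τ) * frobNorm (Xi (n + 1 - τ))) ^ 2
        = lam ^ τ * frobNorm (Xi (n + 1 - τ)) ^ 2 := fun τ _ => by
      rw [mul_pow, Real.sq_sqrt (pow_nonneg hlam0 _)]
    rwa [Finset.sum_congr rfl e1, Finset.sum_congr rfl e2, Finset.sum_congr rfl e3,
      ← hUdef, ← hcdef, ← hVdef] at h
  have hcross : 2 * b0 * U ≤ c * b0 ^ 2 + V := by
    have hterm : ∀ τ ∈ Icc 1 n, 2 * b0 * (lam ^ τ * frobNorm (Xi (n + 1 - τ)))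
        ≤ lam ^ τ * b0 ^ 2 + lam ^ τ * frobNorm (Xi (n + 1 - τ)) ^ 2 := by
      intro τ _
      nlinarith [pow_nonneg hlam0 τ, sq_nonneg (b0 - frobNorm (Xi (n + 1 - τ)))]
    calc 2 * b0 * U = ∑ τ ∈ Icc 1 n, 2 * b0 * (lam ^ τ * frobNorm (Xi (n + 1 - τ))) := by
          rw [hUdef, Finset.mul_sum]
      _ ≤ ∑ τ ∈ Icc 1 n, (lam ^ τ * b0 ^ 2 + lam ^ τ * frobNorm (Xi (n + 1 - τ)) ^ 2) :=
          Finset.sum_le_sum hterm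
      _ = c * b0 ^ 2 + V := by
          rw [Finset.sum_add_distrib, hcdef, hVdef, Finset.sum_mul]
  have hcval : c ≤ lam / (1 - lam) := hcdef ▸ geom_Icc_le hlam0 hlam1 n
  have hD : 1 + c ≤ 1 / (1 - lam) := by
    rw [le_div_iff₀ h1x]
    have h5 : c * (1 - lam) ≤ lam := by
      have := mul_le_mul_of_nonneg_right hcval (le_of_lt h1x)
      rwa [div_mul_cancel₀ _ (ne_of_gt h1x)] at this
    nlinarith
  have step1 : (b0 + U) ^ 2 ≤ (1 + c) * (b0 ^ 2 + V) := by
    have e : (b0 + U) ^ 2 = b0 ^ 2 + 2 * b0 * U + U ^ 2 := by ring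
    rw [e]
    calc b0 ^ 2 + 2 * b0 * U + U ^ 2 ≤ b0 ^ 2 + (c * b0 ^ 2 + V) + c * V := by
          linarith [hCS, hcross]
      _ = (1 + c) * (b0 ^ 2 + V) := by ring
  have step2 : (1 + c) * (b0 ^ 2 + V) ≤ 1 / (1 - lam) * (b0 ^ 2 + V) :=
    mul_le_mul_of_nonneg_right hD (add_nonneg (sq_nonneg b0) hV0)
  have key : (b0 + U) ^ 2 ≤ 1 / (1 - lam) * b0 ^ 2 + 1 / (1 - lam) * V := by
    have := step1.trans step2
    linarith [this]
  linarith [hsq, key, hZ0]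

end
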